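/- arXiv:1109.6402 — 2 statements merged into one kernel-verified Lean document; each statement's English description precedes it below -/
import Mathlib

section
/- Lewis' triviality: Let F be a Boolean algebra of subsets of a set Ω, let P be a finitely additive probability on F, and suppose there is an operator [ ] : F × F → F such that P([x]y)·P(x) = P(x ∩ y) for all x, y ∈ F, and such that this identity also holds for the conditioned measures P_x(·) = P([x]·) and P_{~x}(·) = P([~x]·). Then for any x, y ∈ F with P(x ∩ y) > 0 and P((~x) ∩ y) > 0, one has P(x ∩ y) = P(x)·P(y). -/
/-- Lewis' triviality: if a conditional operator valued in the event algebra
satisfies the conditional probability identity for `P` and for the conditioned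
measures `P_x` and `P_{~x}`, then any `x, y` with `P(x ∩ y) > 0` and
`P(~x ∩ y) > 0` are independent. -/
theorem lewis_triviality {Ω : Type*} (F : Set (Set Ω))
    (hempty : ∅ ∈ F) (huniv : Set.univ ∈ F)
    (hinter : ∀ a ∈ F, ∀ b ∈ F, a ∩ b ∈ F)
    (hunion : ∀ a ∈ F, ∀ b ∈ F, a ∪ b ∈ F)
    (hcompl : ∀ a ∈ F, aᶜ ∈ F)
    (P : Set Ω → ℝ)
    (hnonneg : ∀ a ∈ F, 0 ≤ P a)
    (hP0 : P ∅ = 0) (hP1 : P Set.univ = 1)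
    (hmod : ∀ a ∈ F, ∀ b ∈ F, P (a ∩ b) + P (a ∪ b) = P a + P b)
    (c : Set Ω → Set Ω → Set Ω)
    (hcF : ∀ a ∈ F, ∀ b ∈ F, c a b ∈ F)
    (hcond : ∀ a ∈ F, ∀ b ∈ F, P (c a b) * P a = P (a ∩ b))
    (x y : Set Ω) (hx : x ∈ F) (hy : y ∈ F)
    (hcondx : ∀ a ∈ F, ∀ b ∈ F,
      P (c x (c a b)) * P (c x a) = P (c x (a ∩ b)))
    (hcondnx : ∀ a ∈ F, ∀ b ∈ F,
      P (c xᶜ (c a b)) * P (c xᶜ a) = P (c xᶜ (a ∩ b)))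
    (h1 : 0 < P (x ∩ y)) (h2 : 0 < P (xᶜ ∩ y)) :
    P (x ∩ y) = P x * P y := by
  have hxc : xᶜ ∈ F := hcompl x hx
  have hyc : yᶜ ∈ F := hcompl y hy
  have hxy : x ∩ y ∈ F := hinter x hx y hy
  have hxyc : x ∩ yᶜ ∈ F := hinter x hx yᶜ hyc
  have hxcy : xᶜ ∩ y ∈ F := hinter xᶜ hxc y hy
  have hxcyc : xᶜ ∩ yᶜ ∈ F := hinter xᶜ hxc yᶜ hyc
  have hyx : y ∩ x ∈ F := hinter y hy x hx
  -- P x > 0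
  have e1 : (x ∩ y) ∩ (x ∩ yᶜ) = ∅ := by ext z; simp; try tauto
  have e2 : (x ∩ y) ∪ (x ∩ yᶜ) = x := by ext z; simp; try tauto
  have hPx : 0 < P x := by
    have := hmod (x ∩ y) hxy (x ∩ yᶜ) hxyc
    rw [e1, e2, hP0] at this
    have := hnonneg (x ∩ yᶜ) hxyc
    linarith
  have e3 : (xᶜ ∩ y) ∩ (xᶜ ∩ yᶜ) = ∅ := by ext z; simp; try tauto
  have e4 : (xᶜ ∩ y) ∪ (xᶜ ∩ yᶜ) = xᶜ := by ext z; simp; try tauto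
  have hPxc : 0 < P xᶜ := by
    have := hmod (xᶜ ∩ y) hxcy (xᶜ ∩ yᶜ) hxcyc
    rw [e3, e4, hP0] at this
    have := hnonneg (xᶜ ∩ yᶜ) hxcyc
    linarith
  have e5 : (x ∩ y) ∩ (xᶜ ∩ y) = ∅ := by ext z; simp; try tauto
  have e6 : (x ∩ y) ∪ (xᶜ ∩ y) = y := by ext z; simp; try tauto
  have hPy : P y = P (x ∩ y) + P (xᶜ ∩ y) := by
    have := hmod (x ∩ y) hxy (xᶜ ∩ y) hxcy
    rw [e5, e6, hP0] at this
    linarith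
  -- the conditional event e = c y x
  set e := c y x with he
  have heF : e ∈ F := hcF y hy x hx
  -- P (x ∩ e) = P x
  have A : P (c x e) * P (c x y) = P (c x (y ∩ x)) := hcondx y hy x hx
  have B : P (c x y) * P x = P (x ∩ y) := hcond x hx y hy
  have exyx : x ∩ (y ∩ x) = x ∩ y := by ext z; simp; try tauto
  have C : P (c x (y ∩ x)) * P x = P (x ∩ y) := by
    rw [hcond x hx (y ∩ x) hyx, exyx]
  have hBpos : 0 < P (c x y) := by
    rcases lt_trichotomy (P (c x y)) 0 with h | h | h
    · nlinarith
    · rw [h, zero_mul] at B; linarith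
    · exact h
  have hcxe : P (c x e) = 1 := by
    have hBC : P (c x y) = P (c x (y ∩ x)) := by
      have := mul_right_cancel₀ (ne_of_gt hPx) (B.trans C.symm)
      exact this
    rw [← hBC] at A
    exact mul_right_cancel₀ (ne_of_gt hBpos) (by linarith [A])
  have hxe : P (x ∩ e) = P x := by
    have := hcond x hx e heF
    rw [hcxe, one_mul] at this
    exact this.symm
  -- P (xᶜ ∩ e) = 0
  have A' : P (c xᶜ e) * P (c xᶜ y) = P (c xᶜ (y ∩ x)) := hcondnx y hy x hx
  have B' : P (c xᶜ y) * P xᶜ = P (xᶜ ∩ y) := hcond xᶜ hxc y hy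
  have exc : xᶜ ∩ (y ∩ x) = ∅ := by ext z; simp; try tauto
  have C' : P (c xᶜ (y ∩ x)) = 0 := by
    have h := hcond xᶜ hxc (y ∩ x) hyx
    rw [exc, hP0] at h
    rcases mul_eq_zero.mp h with h' | h'
    · exact h'
    · exact absurd h' (ne_of_gt hPxc)
  have hB'pos : 0 < P (c xᶜ y) := by
    rcases lt_trichotomy (P (c xᶜ y)) 0 with h | h | h
    · nlinarith
    · rw [h, zero_mul] at B'; linarith
    · exact h
  have hcxce : P (c xᶜ e) = 0 := by
    rw [C'] at A'
    rcases mul_eq_zero.mp A' with h' | h'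
    · exact h'
    · exact absurd h' (ne_of_gt hB'pos)
  have hxce : P (xᶜ ∩ e) = 0 := by
    have := hcond xᶜ hxc e heF
    rw [hcxce, zero_mul] at this
    exact this.symm
  -- P e = P x
  have e7 : (x ∩ e) ∩ (xᶜ ∩ e) = ∅ := by ext z; simp; try tauto
  have e8 : (x ∩ e) ∪ (xᶜ ∩ e) = e := by ext z; simp; try tauto
  have hPe : P e = P x := by
    have := hmod (x ∩ e) (hinter x hx e heF) (xᶜ ∩ e) (hinter xᶜ hxc e heF)
    rw [e7, e8, hP0] at this
    linarith
  -- conclude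
  have final : P e * P y = P (y ∩ x) := hcond y hy x hx
  rw [hPe, Set.inter_comm y x] at final
  linarith
end

section
/- The free Boolean algebra generated by an arbitrary set I is ℝ-tangible: there exists a strictly positive finitely additive real probability P on it, given on generators by P(⋂_{x ∈ J} x) = 2^{-|J|} for every finite J ⊆ I. -/
open Finset

attribute [local instance] Classical.propDecidable

namespace FreeBATangible

variable {I : Type*}

/-- `s` is determined by the coordinates in `F`. -/
def Det (F : Finset I) (s : Set (I → Bool)) : Prop :=
  ∀ f g : I → Bool, (∀ i ∈ F, f i = g i) → (f ∈ s ↔ g ∈ s)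

lemma Det.mono {F F' : Finset I} (h : F ⊆ F') {s : Set (I → Bool)} (hd : Det F s) :
    Det F' s := fun f g hfg => hd f g fun i hi => hfg i (h hi)

lemma Det.compl {F : Finset I} {s : Set (I → Bool)} (hd : Det F s) : Det F sᶜ :=
  fun f g hfg => not_congr (hd f g hfg)

lemma Det.inter {F : Finset I} {s t : Set (I → Bool)} (hs : Det F s) (ht : Det F t) :
    Det F (s ∩ t) := fun f g hfg => and_congr (hs f g hfg) (ht f g hfg)

lemma Det.union {F : Finset I} {s t : Set (I → Bool)} (hs : Det F s) (ht : Det F t) :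
    Det F (s ∪ t) := fun f g hfg => or_congr (hs f g hfg) (ht f g hfg)

lemma det_empty (F : Finset I) : Det F (∅ : Set (I → Bool)) := fun _ _ _ => Iff.rfl

lemma det_univ (F : Finset I) : Det F (Set.univ : Set (I → Bool)) := fun _ _ _ => Iff.rfl

/-- Extend a configuration on `F` by `false` elsewhere. -/
noncomputable def extFun (F : Finset I) (g : ↥F → Bool) : I → Bool :=
  fun i => if h : i ∈ F then g ⟨i, h⟩ else false

noncomputable def cnt (F : Finset I) (s : Set (I → Bool)) : ℕ :=
  (Finset.univ.filter (fun g : ↥F → Bool => extFun F g ∈ s)).card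

noncomputable def dnsty (F : Finset I) (s : Set (I → Bool)) : ℝ :=
  (cnt F s : ℝ) / 2 ^ F.card

noncomputable def PP (s : Set (I → Bool)) : ℝ :=
  if h : ∃ F : Finset I, Det F s then dnsty h.choose s else 0

lemma cnt_of_subset {F F' : Finset I} (h : F ⊆ F') {s : Set (I → Bool)} (hd : Det F s) :
    cnt F' s = cnt F s * 2 ^ (F' \ F).card := by
  set π : (↥F' → Bool) → (↥F → Bool) := fun g' i => g' ⟨i.1, h i.2⟩ with hπ
  have key : ∀ g' : ↥F' → Bool, (extFun F' g' ∈ s ↔ extFun F (π g') ∈ s) := by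
    intro g'
    refine hd _ _ fun i hi => ?_
    simp [extFun, π, hi, h hi]
  have fiber : ∀ g : ↥F → Bool,
      (Finset.univ.filter (fun g' : ↥F' → Bool => π g' = g)).card = 2 ^ (F' \ F).card := by
    intro g
    have e : {g' : ↥F' → Bool // π g' = g} ≃ (↥(F' \ F) → Bool) :=
      { toFun := fun p j => p.1 ⟨j.1, sdiff_subset j.2⟩
        invFun := fun q => ⟨fun i => if hm : (i : I) ∈ F then g ⟨i.1, hm⟩
            else q ⟨i.1, mem_sdiff.2 ⟨i.2, hm⟩⟩, by
          funext i
          simp only [π]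
          rw [dif_pos i.2]⟩
        left_inv := by
          rintro ⟨g', hg'⟩
          ext i
          dsimp only
          by_cases hm : (i : I) ∈ F
          · rw [dif_pos hm]
            have h2 : g' i = g ⟨i.1, hm⟩ := by simpa [π] using congrFun hg' ⟨i.1, hm⟩
            exact h2.symm
          · rw [dif_neg hm]
        right_inv := by
          intro q
          funext j
          have hj := mem_sdiff.1 j.2
          dsimp only
          rw [dif_neg hj.2] }
    have h1 : (Finset.univ.filter (fun g' : ↥F' → Bool => π g' = g)).card
        = Fintype.card {g' : ↥F' → Bool // π g' = g} := (Fintype.card_subtype _).symm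
    rw [h1, Fintype.card_congr e, Fintype.card_fun, Fintype.card_bool, Fintype.card_coe]
  -- now compute
  have hstep : (Finset.univ.filter (fun g' : ↥F' → Bool => extFun F' g' ∈ s))
      = Finset.univ.filter (fun g' => extFun F (π g') ∈ s) := by
    apply Finset.filter_congr
    intro g' _
    simp [key g']
  rw [cnt, hstep]
  rw [Finset.card_eq_sum_card_fiberwise
    (f := π) (t := Finset.univ.filter (fun g : ↥F → Bool => extFun F g ∈ s))
    (fun g' hg' => by
      simp only [Finset.mem_coe, mem_filter, mem_univ, true_and] at hg' ⊢
      exact hg')]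
  have hinner : ∀ g ∈ Finset.univ.filter (fun g : ↥F → Bool => extFun F g ∈ s),
      ((Finset.univ.filter (fun g' => extFun F (π g') ∈ s)).filter
        (fun g' => π g' = g)).card = 2 ^ (F' \ F).card := by
    intro g hg
    simp only [mem_filter, mem_univ, true_and] at hg
    rw [Finset.filter_filter]
    have : (Finset.univ.filter (fun g' : ↥F' → Bool => extFun F (π g') ∈ s ∧ π g' = g))
        = Finset.univ.filter (fun g' => π g' = g) := by
      apply Finset.filter_congr
      intro g' _
      constructor
      · exact fun hh => hh.2
      · intro hh; exact ⟨by rw [hh]; exact hg, hh⟩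
    rw [this, fiber]
  rw [Finset.sum_congr rfl hinner, Finset.sum_const, smul_eq_mul, cnt]

lemma cnt_modular (F : Finset I) (s t : Set (I → Bool)) :
    cnt F (s ∩ t) + cnt F (s ∪ t) = cnt F s + cnt F t := by
  simp only [cnt, Finset.card_filter]
  rw [← Finset.sum_add_distrib, ← Finset.sum_add_distrib]
  refine Finset.sum_congr rfl fun g _ => ?_
  by_cases hs' : extFun F g ∈ s <;> by_cases ht' : extFun F g ∈ t <;>
    simp [Set.mem_inter_iff, Set.mem_union, hs', ht']

lemma dens_of_subset {F F' : Finset I} (h : F ⊆ F') {s : Set (I → Bool)} (hd : Det F s) :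
    dnsty F' s = dnsty F s := by
  have hc := cnt_of_subset h hd
  have hcard : (F' \ F).card + F.card = F'.card := by
    rw [Finset.card_sdiff_add_card_eq_card h]
  rw [dnsty, dnsty, hc, ← hcard, pow_add]
  push_cast
  have h2 : (0:ℝ) < 2 ^ (F' \ F).card := by positivity
  have h3 : (0:ℝ) < 2 ^ F.card := by positivity
  field_simp

lemma PP_eq {F : Finset I} {s : Set (I → Bool)} (hd : Det F s) : PP s = dnsty F s := by
  have h : ∃ F : Finset I, Det F s := ⟨F, hd⟩
  rw [PP, dif_pos h]
  have h1 : dnsty (h.choose ∪ F) s = dnsty h.choose s :=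
    dens_of_subset Finset.subset_union_left h.choose_spec
  have h2 : dnsty (h.choose ∪ F) s = dnsty F s :=
    dens_of_subset Finset.subset_union_right hd
  rw [← h1, h2]

lemma dens_nonneg (F : Finset I) (s : Set (I → Bool)) : 0 ≤ dnsty F s := by
  rw [dnsty]; positivity

end FreeBATangible

open FreeBATangible in
/-- The free Boolean algebra generated by a set `I` (realized as the Boolean
subalgebra of `Set (I → Bool)` generated by the sets `{f | f i = true}`) is
ℝ-tangible: there is a finitely additive real probability, strictly positive
on the generated subalgebra, with `P (⋂_{i ∈ J} eᵢ) = 2^{-|J|}` for all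
finite `J ⊆ I`. -/
theorem free_boolean_algebra_tangible (I : Type*) :
    ∀ S : Set (Set (I → Bool)),
      (∅ ∈ S ∧ Set.univ ∈ S ∧
       (∀ x ∈ S, xᶜ ∈ S) ∧
       (∀ x ∈ S, ∀ y ∈ S, x ∩ y ∈ S) ∧
       (∀ x ∈ S, ∀ y ∈ S, x ∪ y ∈ S) ∧
       (∀ i : I, {f : I → Bool | f i = true} ∈ S) ∧
       -- S is the smallest such subalgebra
       (∀ T : Set (Set (I → Bool)),
         ∅ ∈ T → Set.univ ∈ T → (∀ x ∈ T, xᶜ ∈ T) →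
         (∀ x ∈ T, ∀ y ∈ T, x ∩ y ∈ T) → (∀ x ∈ T, ∀ y ∈ T, x ∪ y ∈ T) →
         (∀ i : I, {f : I → Bool | f i = true} ∈ T) → S ⊆ T)) →
      ∃ P : Set (I → Bool) → ℝ,
        (∀ s ∈ S, 0 ≤ P s) ∧ P ∅ = 0 ∧ P Set.univ = 1 ∧
        (∀ s ∈ S, ∀ t ∈ S, P (s ∩ t) + P (s ∪ t) = P s + P t) ∧
        (∀ s ∈ S, s ≠ ∅ → 0 < P s) ∧
        (∀ J : Finset I,
          P (⋂ i ∈ J, {f : I → Bool | f i = true}) = (2 : ℝ)⁻¹ ^ J.card) := by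
  rintro S ⟨-, -, -, -, -, -, hmin⟩
  -- every element of S is determined by a finite set of coordinates
  have hdet : ∀ s ∈ S, ∃ F : Finset I, Det F s := by
    intro s hs
    refine hmin {s | ∃ F : Finset I, Det F s} ⟨∅, det_empty _⟩ ⟨∅, det_univ _⟩
      ?_ ?_ ?_ ?_ hs
    · rintro x ⟨F, hF⟩; exact ⟨F, hF.compl⟩
    · rintro x ⟨F, hF⟩ y ⟨G, hG⟩
      exact ⟨F ∪ G, (hF.mono Finset.subset_union_left).inter
        (hG.mono Finset.subset_union_right)⟩
    · rintro x ⟨F, hF⟩ y ⟨G, hG⟩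
      exact ⟨F ∪ G, (hF.mono Finset.subset_union_left).union
        (hG.mono Finset.subset_union_right)⟩
    · intro i
      refine ⟨{i}, fun f g hfg => ?_⟩
      have := hfg i (Finset.mem_singleton_self i)
      simp only [Set.mem_setOf_eq, this]
  refine ⟨PP, ?_, ?_, ?_, ?_, ?_, ?_⟩
  · -- nonneg
    intro s hs
    obtain ⟨F, hF⟩ := hdet s hs
    rw [PP_eq hF]
    exact dens_nonneg F s
  · -- P ∅ = 0
    rw [PP_eq (det_empty (∅ : Finset I))]
    simp [dnsty, cnt]
  · -- P univ = 1
    rw [PP_eq (det_univ (∅ : Finset I))]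
    rw [dnsty, cnt]
    simp only [Set.mem_univ, Finset.filter_true]
    rw [Finset.card_univ, Fintype.card_fun, Fintype.card_bool, Fintype.card_coe]
    simp
  · -- modularity
    intro s hs t ht
    obtain ⟨F, hF⟩ := hdet s hs
    obtain ⟨G, hG⟩ := hdet t ht
    set F' := F ∪ G with hF'
    have hFs : Det F' s := hF.mono Finset.subset_union_left
    have hGt : Det F' t := hG.mono Finset.subset_union_right
    rw [PP_eq hFs, PP_eq hGt, PP_eq (hFs.inter hGt), PP_eq (hFs.union hGt)]
    rw [dnsty, dnsty, dnsty, dnsty, ← add_div, ← add_div]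
    congr 1
    rw [← Nat.cast_add, ← Nat.cast_add, cnt_modular]
  · -- strict positivity
    intro s hs hne
    obtain ⟨F, hF⟩ := hdet s hs
    rw [PP_eq hF]
    obtain ⟨f, hf⟩ := Set.nonempty_iff_ne_empty.2 hne
    have hmem : extFun F (fun i : ↥F => f i.1) ∈ s := by
      rw [hF _ f (fun i hi => by simp [extFun, hi])]
      exact hf
    have hpos : 0 < cnt F s := by
      rw [cnt, Finset.card_pos]
      exact ⟨_, Finset.mem_filter.2 ⟨Finset.mem_univ _, hmem⟩⟩
    rw [dnsty]
    positivity
  · -- value on generators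
    intro J
    have hd : Det J (⋂ i ∈ J, {f : I → Bool | f i = true}) := by
      intro f g hfg
      simp only [Set.mem_iInter, Set.mem_setOf_eq]
      exact forall₂_congr fun i hi => by rw [hfg i hi]
    rw [PP_eq hd, dnsty, cnt]
    have hfil : (Finset.univ.filter
        (fun g : ↥J → Bool => extFun J g ∈ ⋂ i ∈ J, {f : I → Bool | f i = true}))
        = {fun _ => true} := by
      ext g
      simp only [Finset.mem_filter, Finset.mem_univ, true_and, Finset.mem_singleton,
        Set.mem_iInter, Set.mem_setOf_eq]
      constructor
      · intro hg
        funext i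
        have := hg i.1 i.2
        rwa [extFun, dif_pos i.2] at this
      · intro hg i hi
        rw [extFun, dif_pos hi, hg]
    rw [hfil, Finset.card_singleton]
    rw [inv_pow]
    push_cast
    rw [one_div]
end
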